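/- arXiv:2404.11268 — 3 statements merged into one kernel-verified Lean document; each statement's English description precedes it below -/
import Mathlib

section
/- Fractional Tutte–Berge formula: for any graph G of order n, ν*(G) = (1/2)·(n − max_{T ⊆ V(G)} (i(G−T) − |T|)), where i(G−T) denotes the number of isolated vertices of G − T. -/
/-!
For `≤`, test a fractional matching against the fractional vertex cover that is `1` on `T`,
`0` on the isolated vertices of `G - T` and `1/2` elsewhere (weak LP duality).

For `≥`, let `d` be the maximal deficiency. Taking `T = N(S) \ S` shows `|N(S)| ≥ |S| - d` for
every vertex set `S`, so Hall's theorem with deficiency `d` gives an injection `σ` defined on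
`n - d` vertices with `v ~ σ v`. Weight `1/2` on each edge `v σ(v)`, counted with multiplicity,
is a fractional matching of size `(n - d)/2`: each vertex lies on at most two of these edges.
-/
/-- `f` is a fractional matching of `G`. -/
def IsFracMatching {V : Type*} [Fintype V] [DecidableEq V] (G : SimpleGraph V)
    [DecidableRel G.Adj] (f : Sym2 V → ℝ) : Prop :=
  (∀ e, 0 ≤ f e ∧ f e ≤ 1) ∧ (∀ e, e ∉ G.edgeSet → f e = 0) ∧
    ∀ v : V, ∑ e ∈ G.incidenceFinset v, f e ≤ 1

/-- `s` is the fractional matching number of `G`. -/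
def IsFracMatchingNumber {V : Type*} [Fintype V] [DecidableEq V] (G : SimpleGraph V)
    [DecidableRel G.Adj] (s : ℝ) : Prop :=
  (∃ f, IsFracMatching G f ∧ ∑ e ∈ G.edgeFinset, f e = s) ∧
    ∀ f, IsFracMatching G f → ∑ e ∈ G.edgeFinset, f e ≤ s

/-- `i(G − T)`: the number of vertices outside `T` having no neighbor outside `T`,
i.e. the number of isolated vertices of `G − T`. -/
def isoCount {V : Type*} [Fintype V] [DecidableEq V] (G : SimpleGraph V)
    [DecidableRel G.Adj] (T : Finset V) : ℕ :=
  (Finset.univ.filter (fun v => v ∉ T ∧ ∀ w, G.Adj v w → w ∈ T)).card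

open Finset

def isoFinset {V : Type*} [Fintype V] [DecidableEq V] (G : SimpleGraph V)
    [DecidableRel G.Adj] (T : Finset V) : Finset V :=
  {v | v ∉ T ∧ ∀ w, G.Adj v w → w ∈ T}

section UpperBound

variable {V : Type*} [Fintype V] [DecidableEq V] {G : SimpleGraph V} [DecidableRel G.Adj]

theorem IsFracMatching.sum_le_sum_of_cover {f : Sym2 V → ℝ} (hf : IsFracMatching G f)
    {y : V → ℝ} (hy : ∀ v, 0 ≤ y v) (hcover : ∀ a b, G.Adj a b → 1 ≤ y a + y b) :
    ∑ e ∈ G.edgeFinset, f e ≤ ∑ v, y v := by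
  obtain ⟨hf01, -, hload⟩ := hf
  have hedge : ∀ e ∈ G.edgeFinset, f e ≤ ∑ v ∈ e.toFinset, f e * y v := by
    intro e he
    induction e with
    | _ a b =>
      have hab : G.Adj a b := SimpleGraph.mem_edgeFinset.1 he
      rw [← mul_sum, Sym2.toFinset_mk_eq, sum_pair hab.ne]
      exact le_mul_of_one_le_right (hf01 _).1 (hcover a b hab)
  calc ∑ e ∈ G.edgeFinset, f e ≤ ∑ e ∈ G.edgeFinset, ∑ v ∈ e.toFinset, f e * y v :=
        sum_le_sum hedge
    _ = ∑ v, ∑ e ∈ G.incidenceFinset v, f e * y v :=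
        sum_comm' fun e v => by simp [SimpleGraph.incidenceFinset_eq_filter, and_comm]
    _ = ∑ v, y v * ∑ e ∈ G.incidenceFinset v, f e := by simp_rw [mul_sum, mul_comm]
    _ ≤ ∑ v, y v := sum_le_sum fun v _ => mul_le_of_le_one_right (hy v) (hload v)

theorem isoCount_eq_card_isoFinset (T : Finset V) : isoCount G T = #(isoFinset G T) := rfl

theorem IsFracMatching.two_mul_sum_le {f : Sym2 V → ℝ} (hf : IsFracMatching G f)
    (T : Finset V) :
    2 * ∑ e ∈ G.edgeFinset, f e ≤ Fintype.card V + #T - isoCount G T := by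
  set I := isoFinset G T
  have hI : ∀ v ∈ I, v ∉ T ∧ ∀ w, G.Adj v w → w ∈ T := fun v hv => (mem_filter.1 hv).2
  -- the fractional vertex cover `1` on `T`, `0` on `I`, `1/2` elsewhere
  let y : V → ℝ := fun v => (1 + (if v ∈ T then 1 else 0) - (if v ∈ I then 1 else 0)) / 2
  have hy : ∀ v, 0 ≤ y v := fun v => by
    have hvT := fun h => (hI v h).1
    simp only [y]
    split_ifs <;> simp_all
  have hcover : ∀ a b, G.Adj a b → 1 ≤ y a + y b := by
    intro a b hab
    have ha := fun h => (hI a h).2 b hab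
    have hb := fun h => (hI b h).2 a hab.symm
    simp only [y]
    split_ifs <;> norm_num <;> simp_all
  have hsum : ∑ v, y v = (Fintype.card V + #T - #I) / 2 := by
    simp only [y, ← sum_div, sum_sub_distrib, sum_add_distrib, sum_boole, sum_const,
      card_univ, filter_mem_eq_inter, univ_inter, nsmul_eq_mul, mul_one]
  have := hf.sum_le_sum_of_cover hy hcover
  rw [isoCount_eq_card_isoFinset]
  linarith

end UpperBound

theorem Finset.exists_injective_of_card_le_card_biUnion_add {ι α : Type*} [Fintype ι]
    [DecidableEq α] (t : ι → Finset α) (k : ℕ)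
    (h : ∀ s : Finset ι, #s ≤ #(s.biUnion t) + k) :
    ∃ (D : Finset ι) (σ : D → α), Function.Injective σ ∧ (∀ i : D, σ i ∈ t i) ∧
      Fintype.card ι ≤ #D + k := by
  classical
  -- add `k` new elements adjacent to everything and apply Hall's theorem
  let t' : ι → Finset (α ⊕ Fin k) := fun i => (t i).disjSum univ
  have hall : ∀ s : Finset ι, #s ≤ #(s.biUnion t') := by
    intro s
    rcases s.eq_empty_or_nonempty with rfl | ⟨i, hi⟩
    · simp
    calc #s ≤ #((s.biUnion t).disjSum (univ : Finset (Fin k))) := by simpa using h s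
      _ ≤ #(s.biUnion t') := card_le_card fun x hx => by
        rcases x with a | b <;> simp_all [t']
        exact ⟨i, hi⟩
  obtain ⟨g, hg, hgt⟩ := (all_card_le_biUnion_card_iff_exists_injective t').1 hall
  let D : Finset ι := {i | (g i).isLeft}
  have hgD : ∀ i : D, g i = .inl ((g i).getLeft (mem_filter.1 i.2).2) := fun i => by simp
  refine ⟨D, fun i => (g i).getLeft (mem_filter.1 i.2).2, fun i j hij => ?_, fun i => ?_, ?_⟩
  · exact Subtype.ext (hg ((hgD i).trans ((congrArg Sum.inl hij).trans (hgD j).symm)))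
  · have hi := hgt i
    rw [hgD i] at hi
    exact inl_mem_disjSum.1 hi
  · have hDc : #{i | ¬ (g i).isLeft} ≤ k := by
      simpa using card_le_card_of_injOn g (t := (univ : Finset (Fin k)).map .inr)
        (fun i hi => by
          obtain ⟨b, hb⟩ := Sum.isRight_iff.1 (by simpa using hi)
          simp [hb]) hg.injOn
    have : #D + #{i | ¬ (g i).isLeft} = Fintype.card ι := card_filter_add_card_filter_not _
    omega

section LowerBound

variable {V : Type*} [Fintype V] [DecidableEq V] {G : SimpleGraph V} [DecidableRel G.Adj]

theorem card_le_card_biUnion_neighborFinset_add {d : ℤ}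
    (hd : ∀ T : Finset V, (isoCount G T : ℤ) - #T ≤ d) (s : Finset V) :
    (#s : ℤ) ≤ #(s.biUnion fun v => G.neighborFinset v) + d := by
  set N := s.biUnion fun v => G.neighborFinset v
  -- every vertex of `s \ N` is isolated in `G - (N \ s)`
  have hsub : s \ N ⊆ isoFinset G (N \ s) := by
    intro v hv
    obtain ⟨hvs, hvN⟩ := mem_sdiff.1 hv
    refine mem_filter.2 ⟨mem_univ v, fun h => hvN (mem_sdiff.1 h).1, fun w hw => ?_⟩
    refine mem_sdiff.2 ⟨mem_biUnion.2 ⟨v, hvs, by simpa using hw⟩, fun hws => hvN ?_⟩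
    exact mem_biUnion.2 ⟨w, hws, by simpa using hw.symm⟩
  have h1 := card_le_card hsub
  have h2 := card_sdiff_add_card_inter s N
  have h3 := card_sdiff_add_card_inter N s
  have h4 := hd (N \ s)
  rw [inter_comm] at h3
  rw [isoCount_eq_card_isoFinset] at h4
  omega

theorem isFracMatching_half_card_fiber {ι : Type*} [Fintype ι] (q : ι → Sym2 V)
    (hq : ∀ i, q i ∈ G.edgeSet) (hdeg : ∀ v, #{i | v ∈ q i} ≤ 2) :
    IsFracMatching G fun e => (#{i | q i = e} : ℝ) / 2 := by
  have hload : ∀ v, ∑ e ∈ G.incidenceFinset v, (#{i | q i = e} : ℝ) / 2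
      = #{i | v ∈ q i} / 2 := fun v => by
    rw [← sum_div, ← Nat.cast_sum, sum_card_fiberwise_eq_card_filter]
    simp [SimpleGraph.incidenceFinset_eq_filter, hq]
  refine ⟨fun e => ⟨by positivity, ?_⟩, fun e he => ?_, fun v => ?_⟩
  · induction e with
    | _ a b =>
      have : #{i | q i = s(a, b)} ≤ #{i | a ∈ q i} := card_le_card fun i hi => by simp_all
      have : (#{i | q i = s(a, b)} : ℝ) ≤ 2 := by exact_mod_cast this.trans (hdeg a)
      linarith
  · simp only [div_eq_zero_iff, Nat.cast_eq_zero, card_eq_zero, filter_eq_empty_iff]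
    exact Or.inl fun i _ hi => he (hi ▸ hq i)
  · rw [hload]
    have : (#{i | v ∈ q i} : ℝ) ≤ 2 := by exact_mod_cast hdeg v
    linarith

theorem sum_half_card_fiber {ι : Type*} [Fintype ι] (q : ι → Sym2 V)
    (hq : ∀ i, q i ∈ G.edgeSet) :
    ∑ e ∈ G.edgeFinset, (#{i | q i = e} : ℝ) / 2 = Fintype.card ι / 2 := by
  rw [← sum_div, ← Nat.cast_sum, sum_card_fiberwise_eq_card_filter]
  simp [hq]

theorem exists_isFracMatching_of_injective {D : Finset V} {σ : D → V}
    (hσ : Function.Injective σ) (hadj : ∀ v : D, G.Adj v (σ v)) :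
    ∃ f, IsFracMatching G f ∧ ∑ e ∈ G.edgeFinset, f e = #D / 2 := by
  let q : D → Sym2 V := fun v => s(v, σ v)
  have hq : ∀ v, q v ∈ G.edgeSet := hadj
  have hdeg : ∀ x, #{v | x ∈ q v} ≤ 2 := by
    intro x
    have hsub : ({v | x ∈ q v} : Finset D) ⊆
        ({v | (v : V) = x} : Finset D) ∪ ({v | σ v = x} : Finset D) := by
      intro v
      simp [q, eq_comm]
    calc _ ≤ _ := card_le_card hsub
      _ ≤ _ := card_union_le _ _
      _ ≤ 1 + 1 := add_le_add
          (card_le_one.2 fun a ha b hb => Subtype.ext (by simp_all))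
          (card_le_one.2 fun a ha b hb => hσ (by simp_all))
  exact ⟨_, isFracMatching_half_card_fiber q hq hdeg,
    by rw [sum_half_card_fiber q hq, Fintype.card_coe]⟩

theorem exists_isFracMatching_card_le_two_mul_sum_add {k : ℕ}
    (hk : ∀ T : Finset V, (isoCount G T : ℤ) - #T ≤ k) :
    ∃ f, IsFracMatching G f ∧ Fintype.card V ≤ 2 * ∑ e ∈ G.edgeFinset, f e + k := by
  obtain ⟨D, σ, hσ, hadj, hD⟩ := exists_injective_of_card_le_card_biUnion_add
    (fun v => G.neighborFinset v) k fun s => by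
      have := card_le_card_biUnion_neighborFinset_add hk s
      omega
  obtain ⟨f, hf, hsum⟩ := exists_isFracMatching_of_injective hσ (by simpa using hadj)
  refine ⟨f, hf, ?_⟩
  rw [hsum]
  have : (Fintype.card V : ℝ) ≤ #D + k := by exact_mod_cast hD
  linarith

end LowerBound

/-- fractional Tutte–Berge formula: for any graph `G` of order `n`,
`ν*(G) = (1/2)·(n − max_{T ⊆ V(G)} (i(G−T) − |T|))`. -/
theorem fractional_tutte_berge {V : Type*} [Fintype V] [DecidableEq V]
    (G : SimpleGraph V) [DecidableRel G.Adj] (s : ℝ) (hs : IsFracMatchingNumber G s) :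
    s = (1 / 2) * ((Fintype.card V : ℝ) -
      ((Finset.univ : Finset V).powerset.sup' (Finset.powerset_nonempty _)
        (fun T => (isoCount G T : ℤ) - T.card) : ℤ)) := by
  obtain ⟨T, -, hT⟩ := exists_mem_eq_sup' (powerset_nonempty univ)
    fun T => (isoCount G T : ℤ) - #T
  set d := (univ : Finset V).powerset.sup' (powerset_nonempty _)
    (fun T => (isoCount G T : ℤ) - #T)
  have hle : ∀ T : Finset V, (isoCount G T : ℤ) - #T ≤ d :=
    fun T => le_sup' (fun T => (isoCount G T : ℤ) - #T) (mem_powerset.2 (subset_univ T))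
  obtain ⟨k, hk⟩ : ∃ k : ℕ, d = k :=
    Int.eq_ofNat_of_zero_le ((Int.natCast_nonneg _).trans (by simpa using hle ∅))
  obtain ⟨⟨f, hf, rfl⟩, hmax⟩ := hs
  obtain ⟨g, hg, hgk⟩ := exists_isFracMatching_card_le_two_mul_sum_add (hk ▸ hle)
  have hupper := hf.two_mul_sum_le T
  have hlower := hmax g hg
  have hdT : (d : ℝ) = isoCount G T - #T := by exact_mod_cast hT
  have hdk : (d : ℝ) = k := by exact_mod_cast hk
  linarith
end

section
/- Let G be a graph of order n with fractional matching number s. Then there exists a set T ⊆ V(G) with |T| = t ≤ s and 2s − 2t ≠ 1 such that G is a subgraph of K_t ∨ (K_{2s−2t} + complement of K_{n+t−2s}) (after a suitable identification of vertices), where the vertices outside T not in the clique part form an independent set with neighbors only in T. -/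
/-- The graph `K_t ∨ (K_{m−2t} + complement of K_{n+t−m})` on `Fin n` (where `m = 2s`):
the first `t` vertices form `K_t` (the set `T`, joined to everything), the next `m−2t`
vertices form the clique `K_{m−2t}`, and the remaining `n+t−m` vertices form an
independent set whose neighbors all lie in `T`. -/
def FullExt (n m t : ℕ) : SimpleGraph (Fin n) where
  Adj i j := i ≠ j ∧
    (((i : ℕ) < m - t ∧ (j : ℕ) < m - t) ∨ ((i : ℕ) < t ∨ (j : ℕ) < t))
  symm := by
    constructor
    intro a b h
    obtain ⟨h1, h2⟩ := h
    exact ⟨h1.symm, by tauto⟩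
  loopless := by
    constructor
    intro a h
    exact h.1 rfl

/-!
Let `S` maximise the deficiency `|S| - |N(S)|`, with maximum `d ≥ 0`. Hall's theorem for `V`
against the neighbourhoods enlarged by `d` dummy vertices gives an injection `σ` along edges,
defined off at most `d` vertices; giving each arc `{v, σ v}` weight `1/2` yields a fractional
matching of value `(n - d)/2`. Dually, the weights `0` on `S \ N(S)`, `1` on `N(S) \ S` and `1/2`
elsewhere form a fractional vertex cover of value `(n - d)/2`, so `2s = n - d`.

Put `T = N(S) \ S`, `I = S \ N(S)` and let `M` be the remaining vertices; then `I` only sees `T`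
and `2s = 2|T| + |M|`. A vertex of `M` without neighbours in `M` could be added to `S`, raising the
deficiency, so `|M| ≠ 1`. Listing `T`, then `M`, then `I` gives the embedding.
-/

open Finset

namespace SimpleGraph

def IsFracCover {V : Type*} (G : SimpleGraph V) (g : V → ℝ) : Prop :=
  (∀ v, 0 ≤ g v) ∧ ∀ a b, G.Adj a b → 1 ≤ g a + g b

variable {V : Type*} [Fintype V] [DecidableEq V] (G : SimpleGraph V) [DecidableRel G.Adj]

variable {G} in
theorem _root_.IsFracMatching.sum_le_sum_of_isFracCover {f : Sym2 V → ℝ}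
    (hf : IsFracMatching G f) {g : V → ℝ} (hg : G.IsFracCover g) :
    ∑ e ∈ G.edgeFinset, f e ≤ ∑ v, g v :=
  calc ∑ e ∈ G.edgeFinset, f e
      ≤ ∑ e ∈ G.edgeFinset, ∑ v ∈ e.toFinset, f e * g v := by
        refine sum_le_sum fun e he => ?_
        induction e using Sym2.ind with
        | h a b =>
          have hab : G.Adj a b := by simpa using he
          rw [← mul_sum, Sym2.toFinset_mk_eq, sum_pair hab.ne]
          exact le_mul_of_one_le_right (hf.1 _).1 (hg.2 a b hab)
    _ = ∑ v, ∑ e ∈ G.incidenceFinset v, f e * g v :=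
        sum_comm' fun e v => by simp [mem_incidenceFinset, incidenceSet, Sym2.mem_toFinset]
    _ ≤ ∑ v, g v := by
        refine sum_le_sum fun v _ => ?_
        rw [← sum_mul]
        exact mul_le_of_le_one_left (hg.1 v) (hf.2.2 v)

def deficiency (S : Finset V) : ℤ := #S - #(S.biUnion (G.neighborFinset ·))

theorem exists_injOn_adj_of_deficiency_le {d : ℕ} (h : ∀ S, G.deficiency S ≤ d) :
    ∃ (P : Finset V) (σ : V → V), Set.InjOn σ P ∧ (∀ v ∈ P, G.Adj v (σ v)) ∧
      Fintype.card V ≤ #P + d := by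
  let r : V → Finset (V ⊕ Fin d) := fun v => (G.neighborFinset v).disjSum univ
  have hall : ∀ S : Finset V, #S ≤ #(S.biUnion r) := by
    intro S
    rcases S.eq_empty_or_nonempty with rfl | ⟨a, ha⟩
    · simp
    have hsub : (S.biUnion (G.neighborFinset ·)).disjSum univ ⊆ S.biUnion r := by
      rintro (w | j) hx
      · obtain ⟨b, hb, hw⟩ := mem_biUnion.1 (inl_mem_disjSum.1 hx)
        exact mem_biUnion.2 ⟨b, hb, inl_mem_disjSum.2 hw⟩
      · exact mem_biUnion.2 ⟨a, ha, inr_mem_disjSum.2 (mem_univ j)⟩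
    have hS := h S
    have hsub := card_le_card hsub
    simp only [deficiency, card_disjSum, card_univ, Fintype.card_fin] at hS hsub
    omega
  obtain ⟨f, hf, hfr⟩ := (all_card_le_biUnion_card_iff_exists_injective r).1 hall
  let σ : V → V := fun v => Sum.elim id (fun _ => v) (f v)
  have hσ : ∀ v, (f v).isLeft → f v = .inl (σ v) := by
    intro v hv
    obtain ⟨w, hw⟩ := Sum.isLeft_iff.1 hv
    simp [σ, hw]
  refine ⟨({v | (f v).isLeft} : Finset V), σ, ?_, ?_, ?_⟩
  · intro u hu v hv huv
    simp only [coe_filter, mem_univ, true_and, Set.mem_ofPred_eq] at hu hv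
    exact hf (by rw [hσ u hu, hσ v hv, huv])
  · intro v hv
    simp only [mem_filter, mem_univ, true_and] at hv
    simpa [hσ v hv, r] using hfr v
  · have hright :
        #{v | ¬(f v).isLeft} ≤ #((∅ : Finset V).disjSum (univ : Finset (Fin d))) := by
      refine card_le_card_of_injOn f (fun v hv => ?_) hf.injOn
      simp only [coe_filter, mem_univ, true_and, Set.mem_ofPred_eq, Bool.not_eq_true,
        Sum.isLeft_eq_false] at hv
      obtain ⟨j, hj⟩ := Sum.isRight_iff.1 hv
      simp [hj]
    have := card_filter_add_card_filter_not (s := (univ : Finset V)) (fun v => (f v).isLeft)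
    simp only [card_disjSum, card_empty, card_univ, Fintype.card_fin, zero_add] at hright this
    omega

theorem exists_isFracMatching_of_injOn {P : Finset V} {σ : V → V} (hinj : Set.InjOn σ P)
    (hadj : ∀ v ∈ P, G.Adj v (σ v)) :
    ∃ f, IsFracMatching G f ∧ ∑ e ∈ G.edgeFinset, f e = #P / 2 := by
  let arc : V → Sym2 V := fun v => s(v, σ v)
  have hsum : ∀ t : Finset (Sym2 V),
      ∑ e ∈ t, (#{u ∈ P | arc u = e} : ℝ) / 2 = #{u ∈ P | arc u ∈ t} / 2 := by
    intro t
    rw [← sum_div, ← sum_card_fiberwise_eq_card_filter P t arc]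
    push_cast
    rfl
  refine ⟨fun e => #{u ∈ P | arc u = e} / 2,
    ⟨fun e => ⟨by positivity, ?_⟩, ?_, ?_⟩, ?_⟩
  · have hfib : #{u ∈ P | arc u = e} ≤ #e.toFinset :=
      card_le_card fun u hu => by
        rw [Sym2.mem_toFinset, ← (mem_filter.1 hu).2]
        exact Sym2.mem_mk_left _ _
    have he : #e.toFinset ≤ 2 := by rw [Sym2.card_toFinset]; split_ifs <;> simp
    have : (#{u ∈ P | arc u = e} : ℝ) ≤ 2 := by exact_mod_cast hfib.trans he
    linarith
  · intro e he
    have : {u ∈ P | arc u = e} = ∅ :=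
      filter_eq_empty_iff.2 fun u hu hue => he (hue ▸ G.mem_edgeSet.2 (hadj u hu))
    simp [this]
  · intro v
    rw [hsum]
    have hsub : {u ∈ P | arc u ∈ G.incidenceFinset v} ⊆ insert v {u ∈ P | σ u = v} := by
      intro u hu
      simp only [mem_filter, mem_incidenceFinset, incidenceSet, Set.mem_ofPred_eq, arc,
        Sym2.mem_iff] at hu
      rcases hu.2.2 with rfl | rfl
      · exact mem_insert_self _ _
      · exact mem_insert_of_mem (mem_filter.2 ⟨hu.1, rfl⟩)
    have hfib : #{u ∈ P | σ u = v} ≤ 1 :=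
      card_le_one.2 fun a ha b hb => by
        simp only [mem_filter] at ha hb
        exact hinj ha.1 hb.1 (ha.2.trans hb.2.symm)
    have := (card_le_card hsub).trans (card_insert_le _ _)
    have : (#{u ∈ P | arc u ∈ G.incidenceFinset v} : ℝ) ≤ 2 := by exact_mod_cast (by omega)
    linarith
  · rw [hsum, filter_true_of_mem fun u hu => by simpa [arc] using hadj u hu]

theorem exists_isFracMatching_of_deficiency_le {d : ℕ} (h : ∀ S, G.deficiency S ≤ d) :
    ∃ f, IsFracMatching G f ∧
      ((Fintype.card V : ℝ) - d) / 2 ≤ ∑ e ∈ G.edgeFinset, f e := by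
  obtain ⟨P, σ, hinj, hadj, hcard⟩ := G.exists_injOn_adj_of_deficiency_le h
  obtain ⟨f, hf, hfP⟩ := G.exists_isFracMatching_of_injOn hinj hadj
  refine ⟨f, hf, hfP ▸ ?_⟩
  have : (Fintype.card V : ℝ) ≤ #P + d := by exact_mod_cast hcard
  linarith

noncomputable def deficiencyCover (S : Finset V) (v : V) : ℝ :=
  ((if v ∈ Sᶜ then 1 else 0) + (if v ∈ S.biUnion (G.neighborFinset ·) then 1 else 0)) / 2

theorem isFracCover_deficiencyCover (S : Finset V) : G.IsFracCover (G.deficiencyCover S) := by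
  refine ⟨fun v => by unfold deficiencyCover; positivity, fun a b hab => ?_⟩
  have haN : a ∈ S → b ∈ S.biUnion (G.neighborFinset ·) :=
    fun ha => mem_biUnion.2 ⟨a, ha, (G.mem_neighborFinset _ _).2 hab⟩
  have hbN : b ∈ S → a ∈ S.biUnion (G.neighborFinset ·) :=
    fun hb => mem_biUnion.2 ⟨b, hb, (G.mem_neighborFinset _ _).2 hab.symm⟩
  simp only [deficiencyCover, mem_compl]
  split_ifs <;> norm_num <;> tauto

theorem sum_deficiencyCover (S : Finset V) :
    ∑ v, G.deficiencyCover S v = (Fintype.card V - G.deficiency S) / 2 := by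
  simp only [deficiencyCover, ← sum_div, sum_add_distrib, sum_ite_mem, univ_inter, sum_const,
    deficiency, card_compl, nsmul_eq_mul, mul_one]
  push_cast [Nat.cast_sub (card_le_univ S)]
  ring

theorem two_mul_eq_of_isFracMatchingNumber {S : Finset V}
    (hS : ∀ S', G.deficiency S' ≤ G.deficiency S) {s : ℝ} (hs : IsFracMatchingNumber G s) :
    2 * s = Fintype.card V - G.deficiency S := by
  have hd : 0 ≤ G.deficiency S := by simpa [deficiency] using hS ∅
  obtain ⟨f, hf, hfs⟩ := G.exists_isFracMatching_of_deficiency_le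
    (d := (G.deficiency S).toNat) fun S' => (hS S').trans (Int.self_le_toNat _)
  have hlower := hfs.trans (hs.2 f hf)
  obtain ⟨f', hf', rfl⟩ := hs.1
  have hupper := hf'.sum_le_sum_of_isFracCover (G.isFracCover_deficiencyCover S)
  rw [sum_deficiencyCover] at hupper
  have : ((G.deficiency S).toNat : ℝ) = G.deficiency S := by exact_mod_cast Int.toNat_of_nonneg hd
  linarith

theorem deficiency_eq_card_sdiff_sub_card_sdiff (S : Finset V) :
    G.deficiency S =
      #(S \ S.biUnion (G.neighborFinset ·)) - #(S.biUnion (G.neighborFinset ·) \ S) := by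
  have hI := card_sdiff_add_card_inter S (S.biUnion (G.neighborFinset ·))
  have hT := card_sdiff_add_card_inter (S.biUnion (G.neighborFinset ·)) S
  rw [inter_comm] at hT
  unfold deficiency
  omega

theorem mem_sdiff_of_adj_of_mem_sdiff {S : Finset V} {a b : V}
    (ha : a ∈ S \ S.biUnion (G.neighborFinset ·)) (hab : G.Adj a b) :
    b ∈ S.biUnion (G.neighborFinset ·) \ S := by
  rw [mem_sdiff] at ha ⊢
  refine ⟨mem_biUnion.2 ⟨a, ha.1, (G.mem_neighborFinset _ _).2 hab⟩, fun hb => ha.2 ?_⟩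
  exact mem_biUnion.2 ⟨b, hb, (G.mem_neighborFinset _ _).2 hab.symm⟩

theorem exists_adj_of_forall_deficiency_le {S : Finset V}
    (hS : ∀ S', G.deficiency S' ≤ G.deficiency S) {v : V}
    (hvT : v ∉ S.biUnion (G.neighborFinset ·) \ S)
    (hvI : v ∉ S \ S.biUnion (G.neighborFinset ·)) :
    ∃ w, G.Adj v w ∧ w ∉ S.biUnion (G.neighborFinset ·) \ S ∧
      w ∉ S \ S.biUnion (G.neighborFinset ·) := by
  set N := S.biUnion (G.neighborFinset ·)
  by_contra! h
  have hvw : ∀ w, G.Adj v w → w ∈ N \ S := fun w hvw => by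
    by_contra hw
    exact hvT (G.mem_sdiff_of_adj_of_mem_sdiff (h w hvw hw) hvw.symm)
  have hvS : v ∉ S := fun hvS => by
    obtain ⟨u, huS, huv⟩ := mem_biUnion.1 (show v ∈ N by simpa [mem_sdiff, hvS] using hvI)
    exact (mem_sdiff.1 (hvw u ((G.mem_neighborFinset _ _).1 huv).symm)).2 huS
  have hvN : v ∉ N := fun hvN => hvT (mem_sdiff.2 ⟨hvN, hvS⟩)
  have hN : (insert v S).biUnion (G.neighborFinset ·) = N := by
    rw [biUnion_insert, union_eq_right]
    exact fun w hw => (mem_sdiff.1 (hvw w ((G.mem_neighborFinset _ _).1 hw))).1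
  have := hS (insert v S)
  change (#(insert v S) : ℤ) - #((insert v S).biUnion (G.neighborFinset ·)) ≤ #S - #N at this
  rw [hN, card_insert_of_notMem hvS] at this
  omega

theorem card_compl_sdiff_union_sdiff_ne_one {S : Finset V}
    (hS : ∀ S', G.deficiency S' ≤ G.deficiency S) :
    #(S.biUnion (G.neighborFinset ·) \ S ∪ S \ S.biUnion (G.neighborFinset ·))ᶜ ≠ 1 := by
  intro h
  obtain ⟨v, hv⟩ := card_eq_one.1 h
  have hvM := hv ▸ mem_singleton_self v
  simp only [mem_compl, mem_union, not_or] at hvM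
  obtain ⟨w, hvw, hwT, hwI⟩ := G.exists_adj_of_forall_deficiency_le hS hvM.1 hvM.2
  have hwM : w ∈ ({v} : Finset V) := hv ▸ mem_compl.2 (not_or.2 ⟨hwT, hwI⟩ ∘ mem_union.1)
  exact hvw.ne (mem_singleton.1 hwM).symm

end SimpleGraph

theorem exists_equiv_fin_monotone {V α : Type*} [Fintype V] [LinearOrder α] (key : V → α) :
    ∃ φ : V ≃ Fin (Fintype.card V), Monotone (key ∘ φ.symm) := by
  let e := Fintype.equivFin V
  refine ⟨e.trans (Tuple.sort (key ∘ e.symm)).symm, ?_⟩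
  convert Tuple.monotone_sort (key ∘ e.symm) using 1
  ext i
  simp

theorem val_lt_card_of_monotone {V α : Type*} [Fintype V] [LinearOrder α] {key : V → α}
    {φ : V ≃ Fin (Fintype.card V)} (hφ : Monotone (key ∘ φ.symm)) {S : Finset V}
    (hS : ∀ u v, key u ≤ key v → v ∈ S → u ∈ S) {v : V} (hv : v ∈ S) :
    (φ v : ℕ) < #S := by
  have hsub : (Iic (φ v)).map φ.symm.toEmbedding ⊆ S := by
    intro u hu
    obtain ⟨i, hi, rfl⟩ := mem_map.1 hu
    refine hS _ v ?_ hv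
    simpa using hφ (mem_Iic.1 hi)
  simpa using card_le_card hsub

theorem exists_equiv_fin_lt_card_of_subset {V : Type*} [Fintype V] [DecidableEq V]
    {A B : Finset V} (hAB : A ⊆ B) :
    ∃ φ : V ≃ Fin (Fintype.card V),
      (∀ v ∈ A, (φ v : ℕ) < #A) ∧ ∀ v ∈ B, (φ v : ℕ) < #B := by
  let key : V → ℕ := fun v => if v ∈ A then 0 else if v ∈ B then 1 else 2
  obtain ⟨φ, hφ⟩ := exists_equiv_fin_monotone key
  refine ⟨φ, fun v hv => val_lt_card_of_monotone hφ (fun u w h hw => ?_) hv,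
    fun v hv => val_lt_card_of_monotone hφ (fun u w h hw => ?_) hv⟩
  · simp only [key, hw] at h
    split_ifs at h with hu <;> first | exact hu | omega
  · have := @hAB u
    simp only [key, hw] at h
    split_ifs at h <;> tauto

theorem SimpleGraph.exists_equiv_adj_fullExt {V : Type*} [Fintype V] [DecidableEq V]
    (G : SimpleGraph V) {T I : Finset V} (hTI : Disjoint T I)
    (hI : ∀ a ∈ I, ∀ b, G.Adj a b → b ∈ T) :
    ∃ φ : V ≃ Fin (Fintype.card V), ∀ a b, G.Adj a b →
      (FullExt (Fintype.card V) (Fintype.card V - #I + #T) #T).Adj (φ a) (φ b) := by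
  obtain ⟨φ, hφT, hφI⟩ :=
    exists_equiv_fin_lt_card_of_subset (subset_compl_iff_disjoint_right.2 hTI)
  refine ⟨φ, fun a b hab => ⟨φ.injective.ne hab.ne, ?_⟩⟩
  by_cases haT : a ∈ T
  · exact .inr (.inl (hφT a haT))
  by_cases hbT : b ∈ T
  · exact .inr (.inr (hφT b hbT))
  have ha := hφI a (mem_compl.2 fun ha => hbT (hI a ha b hab))
  have hb := hφI b (mem_compl.2 fun hb => haT (hI b hb a hab.symm))
  rw [card_compl] at ha hb
  exact .inl ⟨by omega, by omega⟩

/-- a graph of order `n` with fractional matching number `s` is (up to a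
relabelling of vertices) a subgraph of `K_t ∨ (K_{2s−2t} + complement of K_{n+t−2s})`
for some `t ≤ s` with `2s − 2t ≠ 1`. -/
theorem subgraph_of_extremal {V : Type*} [Fintype V] [DecidableEq V] (G : SimpleGraph V)
    [DecidableRel G.Adj] (n : ℕ) (hn : Fintype.card V = n) (s : ℝ)
    (hs : IsFracMatchingNumber G s) :
    ∃ (m t : ℕ), (m : ℝ) = 2 * s ∧ (t : ℝ) ≤ s ∧ m - 2 * t ≠ 1 ∧
      ∃ φ : V ≃ Fin n, ∀ a b : V, G.Adj a b → (FullExt n m t).Adj (φ a) (φ b) := by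
  subst hn
  obtain ⟨S, -, hS⟩ := (univ : Finset (Finset V)).exists_max_image G.deficiency univ_nonempty
  replace hS : ∀ S', G.deficiency S' ≤ G.deficiency S := fun S' => hS S' (mem_univ S')
  have hM := G.card_compl_sdiff_union_sdiff_ne_one hS
  have h2s := G.two_mul_eq_of_isFracMatchingNumber hS hs
  rw [G.deficiency_eq_card_sdiff_sub_card_sdiff] at h2s
  push_cast at h2s
  set N := S.biUnion (G.neighborFinset ·)
  have hTI : Disjoint (N \ S) (S \ N) := disjoint_sdiff_sdiff
  rw [card_compl, card_union_of_disjoint hTI] at hM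
  have hIV : #(S \ N) ≤ Fintype.card V := card_le_univ _
  obtain ⟨φ, hφ⟩ :=
    G.exists_equiv_adj_fullExt hTI fun a ha b => G.mem_sdiff_of_adj_of_mem_sdiff ha
  refine ⟨Fintype.card V - #(S \ N) + #(N \ S), #(N \ S), ?_, ?_, by omega, φ, hφ⟩
  · push_cast [Nat.cast_sub hIV]
    linarith
  · have : (#(N \ S) + #(S \ N) : ℝ) ≤ Fintype.card V := by
      exact_mod_cast card_union_of_disjoint hTI ▸ card_le_univ _
    linarith
end

section
/- Let n, δ, ℓ be positive integers, s a half-integer with 2s odd, n ≥ 2s+1 ≥ 5 and ℓ ≥ 2. If G is a graph of order n with fractional matching number s and minimum degree δ, then the number of copies of K_ℓ in G is at most max(g_ℓ(n,s,δ), g_ℓ(n,s,s−3/2)), where g_ℓ(n,s,t) = C(2s−t, ℓ) + C(t, ℓ−1)·(n + t − 2s − 1) + C(δ, ℓ−1) for integer t. -/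
/-- With `σ = 2s`, `g_ℓ(n,s,t) = C(σ−t, ℓ) + C(t, ℓ−1)·(n + t − σ − 1) + C(δ, ℓ−1)`,
the number of `ℓ`-cliques of the extremal graph `G(n,s,t)` with minimum degree `δ`. -/
def gclOdd (n σ δ ℓ t : ℕ) : ℕ :=
  Nat.choose (σ - t) ℓ + Nat.choose t (ℓ - 1) * (n + t - σ - 1) +
    Nat.choose δ (ℓ - 1)

/-!
Weak LP duality and a deficiency version of Hall's theorem show that `2ν*(G)` is the minimum of
`|A| + |B|` over pairs `(A, B)` such that every edge `uv` has `u ∈ A` or `v ∈ B`. Fix a minimum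
pair, so `|A| + |B| = 2s`, and put `U = A ∪ B`, `T = A ∩ B`, `t = |T|`. Every neighbour of a vertex
outside `U` lies in `T`, so `δ ≤ t`. A lone vertex of `U \ T` would have all its neighbours in `T`
and could be dropped from the pair, so the odd number `|U \ T| = 2s - 2t` is at least `3`, i.e.
`t ≤ s - 3/2`. Counting the `ℓ`-cliques through a vertex of minimum degree, through another vertex
outside `U`, or inside `U` gives at most `g_ℓ(n, s, t)`, a convex function of `t`, hence at most
its value at `δ` or at `s - 3/2`.
-/

open Finset

section DoubleCover

variable {V : Type*} {G : SimpleGraph V}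

def IsFracCover (G : SimpleGraph V) (w : V → ℝ) : Prop :=
  (∀ v, 0 ≤ w v) ∧ ∀ ⦃u v⦄, G.Adj u v → 1 ≤ w u + w v

/-- `(A, B)` is a vertex cover of the bipartite double cover of `G`: every edge, read in either
direction, starts in `A` or ends in `B`. -/
def IsDoubleCover (G : SimpleGraph V) (A B : Finset V) : Prop :=
  ∀ ⦃u v⦄, G.Adj u v → u ∈ A ∨ v ∈ B

variable [DecidableEq V] {A B : Finset V}

lemma IsDoubleCover.isFracCover (h : IsDoubleCover G A B) :
    IsFracCover G fun v => ((if v ∈ A then 1 else 0) + (if v ∈ B then 1 else 0)) / 2 := by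
  refine ⟨fun v => by positivity, fun u v huv => ?_⟩
  rcases h huv with hu | hv <;> rcases h huv.symm with hv' | hu'
  all_goals simp only [*, if_true]; split_ifs <;> norm_num

lemma IsDoubleCover.mem_inter_of_adj (h : IsDoubleCover G A B) {z y : V}
    (hz : z ∉ A ∪ B) (hzy : G.Adj z y) : y ∈ A ∩ B := by
  rw [mem_union, not_or] at hz
  exact mem_inter.mpr ⟨(h hzy.symm).resolve_right hz.2, (h hzy).resolve_left hz.1⟩

lemma IsDoubleCover.erase_left (h : IsDoubleCover G A B) {x : V}
    (hx : ∀ y, G.Adj x y → y ∈ B) : IsDoubleCover G (A.erase x) B := by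
  intro u v huv
  by_cases hux : u = x
  · exact .inr (hx v (hux ▸ huv))
  · exact (h huv).imp_left (mem_erase.mpr ⟨hux, ·⟩)

lemma IsDoubleCover.erase_right (h : IsDoubleCover G A B) {x : V}
    (hx : ∀ y, G.Adj x y → y ∈ A) : IsDoubleCover G A (B.erase x) := by
  intro u v huv
  by_cases hvx : v = x
  · exact .inl (hx u (hvx ▸ huv.symm))
  · exact (h huv).imp_right (mem_erase.mpr ⟨hvx, ·⟩)

theorem IsDoubleCover.card_union_sdiff_inter_ne_one (h : IsDoubleCover G A B)
    (hmin : ∀ A' B', IsDoubleCover G A' B' → #A + #B ≤ #A' + #B') :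
    #((A ∪ B) \ (A ∩ B)) ≠ 1 := by
  intro h1
  obtain ⟨x, hx⟩ := card_eq_one.mp h1
  have hxU : x ∈ (A ∪ B) \ (A ∩ B) := hx ▸ mem_singleton_self x
  have hN : ∀ y, G.Adj x y → y ∈ A ∩ B := by
    intro y hxy
    by_contra hy
    by_cases hyU : y ∈ A ∪ B
    · have : y ∈ (A ∪ B) \ (A ∩ B) := mem_sdiff.mpr ⟨hyU, hy⟩
      rw [hx, mem_singleton] at this
      exact hxy.ne this.symm
    · exact (mem_sdiff.mp hxU).2 (h.mem_inter_of_adj hyU hxy.symm)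
  rcases mem_union.mp (mem_sdiff.mp hxU).1 with hxA | hxB
  · have := hmin _ _ (h.erase_left fun y hy => (mem_inter.mp (hN y hy)).2)
    rw [card_erase_of_mem hxA] at this
    have := card_pos.mpr ⟨x, hxA⟩
    omega
  · have := hmin _ _ (h.erase_right fun y hy => (mem_inter.mp (hN y hy)).1)
    rw [card_erase_of_mem hxB] at this
    have := card_pos.mpr ⟨x, hxB⟩
    omega

lemma card_filter_mem_sym2_le_two {M : Finset (V × V)}
    (h₁ : Set.InjOn Prod.fst (M : Set (V × V))) (h₂ : Set.InjOn Prod.snd (M : Set (V × V)))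
    (u : V) : #{p ∈ M | u ∈ s(p.1, p.2)} ≤ 2 := by
  have hle : ∀ g : V × V → V, Set.InjOn g (M : Set (V × V)) → #{p ∈ M | g p = u} ≤ 1 :=
    fun g hg => card_le_one.mpr fun p hp q hq => hg (mem_filter.mp hp).1 (mem_filter.mp hq).1
      ((mem_filter.mp hp).2.trans (mem_filter.mp hq).2.symm)
  calc #{p ∈ M | u ∈ s(p.1, p.2)} ≤ #({p ∈ M | p.1 = u} ∪ {p ∈ M | p.2 = u}) :=
        card_le_card fun p hp => by
          rw [mem_filter, Sym2.mem_iff] at hp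
          rcases hp with ⟨hpM, rfl | rfl⟩ <;> simp [hpM]
    _ ≤ 2 := (card_union_le _ _).trans (add_le_add (hle _ h₁) (hle _ h₂))

end DoubleCover

theorem exists_matching_of_card_le_card_biUnion_add {ι α : Type*} [Fintype ι] [Fintype α]
    [DecidableEq α] (t : ι → Finset α) (a : ℕ) (h : ∀ s : Finset ι, #s ≤ #(s.biUnion t) + a) :
    ∃ M : Finset (ι × α), (∀ p ∈ M, p.2 ∈ t p.1) ∧ Set.InjOn Prod.fst (M : Set (ι × α)) ∧
      Set.InjOn Prod.snd (M : Set (ι × α)) ∧ Fintype.card ι ≤ #M + a := by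
  classical
  -- Hall's condition holds once `a` dummy vertices, adjacent to everything, are added.
  let t' : ι → Finset (α ⊕ Fin a) := fun i => (t i).disjSum univ
  have hall : ∀ s : Finset ι, #s ≤ #(s.biUnion t') := by
    intro s
    rcases s.eq_empty_or_nonempty with rfl | ⟨i₀, hi₀⟩
    · simp
    calc #s ≤ #((s.biUnion t).disjSum (univ : Finset (Fin a))) := by simpa using h s
      _ ≤ #(s.biUnion t') := card_le_card fun x hx => by
        rcases x with y | j
        · simpa [t'] using hx
        · simpa [t'] using ⟨i₀, hi₀⟩
  obtain ⟨f, hf, hft⟩ := (all_card_le_biUnion_card_iff_exists_injective t').mp hall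
  let M : Finset (ι × α) := {p | f p.1 = .inl p.2}
  have hM : ∀ p, p ∈ M ↔ f p.1 = .inl p.2 := by simp [M]
  refine ⟨M, fun p hp => ?_, fun p hp q hq hpq => ?_, fun p hp q hq hpq => ?_, ?_⟩
  · simpa [t', (hM p).mp hp] using hft p.1
  · rw [mem_coe, hM] at hp hq
    exact Prod.ext hpq (Sum.inl_injective (hp.symm.trans (hpq ▸ hq)))
  · rw [mem_coe, hM] at hp hq
    exact Prod.ext (hf (hp.trans (hpq ▸ hq.symm))) hpq
  · have hsub : univ.image f ⊆ M.image (Sum.inl ∘ Prod.snd) ∪ univ.image .inr := by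
      intro x hx
      obtain ⟨i, -, rfl⟩ := mem_image.mp hx
      rcases hfi : f i with y | j
      · exact mem_union_left _ (mem_image.mpr ⟨(i, y), (hM _).mpr hfi, rfl⟩)
      · exact mem_union_right _ (mem_image_of_mem _ (mem_univ j))
    calc Fintype.card ι = #(univ.image f) := (card_image_of_injective _ hf).symm
      _ ≤ #(M.image (Sum.inl ∘ Prod.snd)) + #(univ.image (Sum.inr : Fin a → α ⊕ Fin a)) :=
        (card_le_card hsub).trans (card_union_le _ _)
      _ ≤ #M + a := add_le_add card_image_le (card_image_le.trans (by simp))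

section FracMatching

variable {V : Type*} [Fintype V] [DecidableEq V] {G : SimpleGraph V} [DecidableRel G.Adj]

lemma sum_filter_mem_sym2 {M : Type*} [AddCommMonoid M] (w : V → M) {u v : V} (huv : u ≠ v) :
    ∑ x with x ∈ s(u, v), w x = w u + w v := by
  rw [show ({x | x ∈ s(u, v)} : Finset V) = {u, v} by ext; simp, sum_pair huv]

theorem IsFracMatching.sum_le_sum_of_isFracCover_s16 {f : Sym2 V → ℝ} (hf : IsFracMatching G f)
    {w : V → ℝ} (hw : IsFracCover G w) : ∑ e ∈ G.edgeFinset, f e ≤ ∑ v, w v := by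
  have hedge : ∀ e ∈ G.edgeFinset, f e ≤ f e * ∑ x with x ∈ e, w x := by
    intro e he
    induction e using Sym2.ind with
    | _ u v =>
      have huv : G.Adj u v := by simpa using he
      rw [sum_filter_mem_sym2 w huv.ne]
      exact le_mul_of_one_le_right (hf.1 _).1 (hw.2 huv)
  calc ∑ e ∈ G.edgeFinset, f e
      ≤ ∑ e ∈ G.edgeFinset, f e * ∑ x with x ∈ e, w x := sum_le_sum hedge
    _ = ∑ x, w x * ∑ e ∈ G.incidenceFinset x, f e := by
      simp only [SimpleGraph.incidenceFinset_eq_filter, mul_sum, sum_filter]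
      rw [sum_comm]
      exact sum_congr rfl fun x _ => sum_congr rfl fun e _ => by split_ifs <;> ring
    _ ≤ ∑ x, w x := sum_le_sum fun x _ => mul_le_of_le_one_right (hw.1 x) (hf.2.2 x)

theorem IsFracMatching.two_mul_sum_le_card_add_card {f : Sym2 V → ℝ} (hf : IsFracMatching G f)
    {A B : Finset V} (h : IsDoubleCover G A B) : 2 * ∑ e ∈ G.edgeFinset, f e ≤ #A + #B := by
  have := hf.sum_le_sum_of_isFracCover_s16 h.isFracCover
  simp only [← sum_div, sum_add_distrib, sum_boole, filter_mem_eq_inter, univ_inter] at this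
  linarith

theorem exists_isFracMatching_of_injOn (M : Finset (V × V)) (hadj : ∀ p ∈ M, G.Adj p.1 p.2)
    (h₁ : Set.InjOn Prod.fst (M : Set (V × V))) (h₂ : Set.InjOn Prod.snd (M : Set (V × V))) :
    ∃ f, IsFracMatching G f ∧ ∑ e ∈ G.edgeFinset, f e = #M / 2 := by
  have hle := card_filter_mem_sym2_le_two h₁ h₂
  have hedge : ∀ p ∈ M, s(p.1, p.2) ∈ G.edgeFinset := fun p hp => by simpa using hadj p hp
  refine ⟨fun e => (#{p ∈ M | s(p.1, p.2) = e} : ℝ) / 2,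
    ⟨fun e => ⟨by positivity, ?_⟩, fun e he => ?_, fun u => ?_⟩, ?_⟩
  · induction e using Sym2.ind with
    | _ u v =>
      have : #{p ∈ M | s(p.1, p.2) = s(u, v)} ≤ 2 := (card_le_card
        (monotone_filter_right _ fun p _ hp => hp ▸ Sym2.mem_mk_left u v)).trans (hle u)
      rw [div_le_one two_pos]
      exact_mod_cast this
  · have : {p ∈ M | s(p.1, p.2) = e} = ∅ :=
      filter_eq_empty_iff.mpr fun p hp hpe => he (hpe ▸ G.mem_edgeSet.mpr (hadj p hp))
    simp [this]
  · rw [← sum_div, ← Nat.cast_sum, sum_card_fiberwise_eq_card_filter, div_le_one two_pos]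
    exact_mod_cast (card_le_card (monotone_filter_right _ fun p _ hp => by
      simpa using ((SimpleGraph.mem_incidenceFinset _ _ _).mp hp).2)).trans (hle u)
  · rw [← sum_div, ← Nat.cast_sum, ← card_eq_sum_card_fiberwise hedge]

variable (G) in
theorem exists_isFracMatching_isDoubleCover :
    ∃ f, IsFracMatching G f ∧
      ∃ A B, IsDoubleCover G A B ∧ (#A + #B : ℝ) ≤ 2 * ∑ e ∈ G.edgeFinset, f e := by
  let N : Finset V → Finset V := fun S => S.biUnion fun v => G.neighborFinset v
  -- `S` has maximal deficiency `a`; the cover is `(Sᶜ, N S)`, the matching comes from Hall.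
  obtain ⟨S, -, hS⟩ := exists_max_image univ (fun S => (#S : ℤ) - #(N S)) ⟨∅, mem_univ _⟩
  obtain ⟨a, ha⟩ : ∃ a : ℕ, (#S : ℤ) - #(N S) = a :=
    Int.eq_ofNat_of_zero_le (by simpa [N] using hS ∅ (mem_univ _))
  obtain ⟨M, hMadj, h₁, h₂, hM⟩ :=
    exists_matching_of_card_le_card_biUnion_add (fun v => G.neighborFinset v) a fun T => by
      have := hS T (mem_univ T)
      simp only [N] at this ha
      omega
  obtain ⟨f, hf, hfM⟩ :=
    exists_isFracMatching_of_injOn M (fun p hp => by simpa using hMadj p hp) h₁ h₂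
  refine ⟨f, hf, univ \ S, N S, fun u v huv => ?_, ?_⟩
  · by_cases hu : u ∈ S
    · exact .inr (mem_biUnion.mpr ⟨u, hu, by simpa using huv⟩)
    · exact .inl (by simpa using hu)
  · have hcard : #(univ \ S) + #(N S) ≤ #M := by
      rw [card_sdiff_of_subset (subset_univ S), card_univ]
      have := card_le_univ S
      omega
    rw [hfM]
    linarith [(by exact_mod_cast hcard : (#(univ \ S) : ℝ) + #(N S) ≤ #M)]

theorem IsFracMatchingNumber.exists_degree_le_of_odd {σ : ℕ}
    (hfm : IsFracMatchingNumber G (σ / 2)) (hodd : Odd σ) :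
    ∃ (U : Finset V) (t : ℕ), #U + t = σ ∧ 2 * t + 3 ≤ σ ∧ ∀ z ∉ U, G.degree z ≤ t := by
  obtain ⟨f, hf, A, B, hAB, hcard⟩ := exists_isFracMatching_isDoubleCover G
  have hle : #A + #B ≤ σ := by
    have := hfm.2 f hf
    exact_mod_cast (show (#A + #B : ℝ) ≤ σ by linarith)
  have hge : ∀ A' B', IsDoubleCover G A' B' → σ ≤ #A' + #B' := by
    intro A' B' h'
    obtain ⟨f₀, hf₀, hval⟩ := hfm.1
    have := hf₀.two_mul_sum_le_card_add_card h'
    exact_mod_cast (show (σ : ℝ) ≤ #A' + #B' by linarith)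
  have hne := hAB.card_union_sdiff_inter_ne_one fun A' B' h' => hle.trans (hge A' B' h')
  have hσ := hge A B hAB
  have hIU : A ∩ B ⊆ A ∪ B := inter_subset_union
  have := card_union_add_card_inter A B
  have := card_le_card hIU
  have := card_sdiff_of_subset hIU
  refine ⟨A ∪ B, #(A ∩ B), by omega, ?_, fun z hz => ?_⟩
  · obtain ⟨k, rfl⟩ := hodd
    omega
  · rw [← G.card_neighborFinset_eq_degree]
    exact card_le_card fun y hy => hAB.mem_inter_of_adj hz ((G.mem_neighborFinset _ _).mp hy)

end FracMatching

section Cliques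

variable {V : Type*} [Fintype V] [DecidableEq V] {G : SimpleGraph V} [DecidableRel G.Adj]

lemma card_filter_mem_cliqueFinset_le (ℓ : ℕ) (v : V) :
    #{K ∈ G.cliqueFinset ℓ | v ∈ K} ≤ (G.degree v).choose (ℓ - 1) := by
  rw [← G.card_neighborFinset_eq_degree, ← card_powersetCard]
  refine card_le_card_of_injOn (fun K => K.erase v) (fun K hK => ?_) fun K₁ hK₁ K₂ hK₂ h => ?_
  · obtain ⟨hK, hvK⟩ := mem_filter.mp hK
    have hKv := (G.mem_cliqueFinset_iff.mp hK).erase_of_mem hvK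
    refine mem_powersetCard.mpr ⟨fun w hw => ?_, hKv.card_eq⟩
    obtain ⟨hwv, hwK⟩ := mem_erase.mp hw
    exact (G.mem_neighborFinset _ _).mpr
      ((G.mem_cliqueFinset_iff.mp hK).1 hvK hwK (Ne.symm hwv))
  · rw [← insert_erase (mem_filter.mp hK₁).2, ← insert_erase (mem_filter.mp hK₂).2]
    exact congrArg (insert v) h

theorem card_cliqueFinset_le_sum_choose_degree (ℓ : ℕ) (U : Finset V) (v : V) :
    #(G.cliqueFinset ℓ) ≤ (G.degree v).choose (ℓ - 1) +
      ∑ z ∈ Uᶜ.erase v, (G.degree z).choose (ℓ - 1) + (#(U.erase v)).choose ℓ := by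
  have hsub : G.cliqueFinset ℓ ⊆ {K ∈ G.cliqueFinset ℓ | v ∈ K} ∪
      (Uᶜ.erase v).biUnion (fun z => {K ∈ G.cliqueFinset ℓ | z ∈ K}) ∪
      (U.erase v).powersetCard ℓ := by
    intro K hK
    by_cases hvK : v ∈ K
    · simp [hK, hvK]
    by_cases hKU : K ⊆ U
    · refine mem_union_right _ (mem_powersetCard.mpr ⟨fun w hw => ?_, ?_⟩)
      · exact mem_erase.mpr ⟨fun h => hvK (h ▸ hw), hKU hw⟩
      · exact (G.mem_cliqueFinset_iff.mp hK).card_eq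
    · obtain ⟨z, hzK, hzU⟩ := not_subset.mp hKU
      refine mem_union_left _ (mem_union_right _ (mem_biUnion.mpr ⟨z, ?_, ?_⟩))
      · exact mem_erase.mpr ⟨fun h => hvK (h ▸ hzK), mem_compl.mpr hzU⟩
      · exact mem_filter.mpr ⟨hK, hzK⟩
  calc #(G.cliqueFinset ℓ) ≤ _ := card_le_card hsub
    _ ≤ _ := (card_union_le _ _).trans (Nat.add_le_add_right (card_union_le _ _) _)
    _ ≤ _ := by
      rw [card_powersetCard]
      gcongr
      · exact card_filter_mem_cliqueFinset_le ℓ v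
      · exact card_biUnion_le.trans (sum_le_sum fun z _ => card_filter_mem_cliqueFinset_le ℓ z)

theorem card_cliqueFinset_le_gclOdd {n σ δ ℓ t : ℕ} (hℓ : 1 ≤ ℓ) (hn : Fintype.card V = n)
    (hσn : σ < n) {U : Finset V} (hU : #U + t = σ) (htU : t < #U)
    (hdeg : ∀ z ∉ U, G.degree z ≤ t) {v : V} (hv : G.degree v = δ) :
    #(G.cliqueFinset ℓ) ≤ gclOdd n σ δ ℓ t := by
  obtain ⟨k, rfl⟩ : ∃ k, ℓ = k + 1 := ⟨ℓ - 1, by omega⟩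
  obtain ⟨m, hm⟩ : ∃ m, #U = m + 1 := ⟨#U - 1, by omega⟩
  obtain ⟨r, hr⟩ : ∃ r, #Uᶜ = r + 1 := ⟨#Uᶜ - 1, by rw [card_compl, hn]; omega⟩
  have hgcl : gclOdd n σ δ (k + 1) t = (m + 1).choose (k + 1) + t.choose k * r + δ.choose k := by
    rw [card_compl, hn] at hr
    rw [gclOdd, show σ - t = m + 1 by omega, show n + t - σ - 1 = r by omega, Nat.add_sub_cancel]
  calc #(G.cliqueFinset (k + 1))
      ≤ δ.choose k + ∑ z ∈ Uᶜ.erase v, (G.degree z).choose k + (#(U.erase v)).choose (k + 1) := by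
        simpa [hv] using card_cliqueFinset_le_sum_choose_degree (G := G) (k + 1) U v
    _ ≤ δ.choose k + #(Uᶜ.erase v) * t.choose k + (#(U.erase v)).choose (k + 1) := by
        gcongr
        exact sum_le_card_nsmul _ _ _ fun z hz =>
          Nat.choose_le_choose k (hdeg z (mem_compl.mp (mem_of_mem_erase hz)))
    _ ≤ gclOdd n σ δ (k + 1) t := by
        rw [hgcl]
        by_cases hvU : v ∈ U
        · rw [erase_eq_of_notMem fun h => mem_compl.mp h hvU, hr, card_erase_of_mem hvU, hm,
            Nat.add_sub_cancel, Nat.choose_succ_succ' m k]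
          have := Nat.choose_le_choose k (show t ≤ m by omega)
          nlinarith
        · rw [card_erase_of_mem (mem_compl.mpr hvU), hr, erase_eq_of_notMem hvU, hm,
            Nat.add_sub_cancel]
          nlinarith

end Cliques

theorem le_max_of_forall_sub_le_sub {f : ℕ → ℤ} {a b : ℕ}
    (hf : ∀ i j, a ≤ i → i ≤ j → j < b → f (i + 1) - f i ≤ f (j + 1) - f j) {t : ℕ}
    (hat : a ≤ t) (htb : t ≤ b) : f t ≤ max (f a) (f b) := by
  by_cases hinc : f t ≤ f (t + 1) ∨ t = b
  · refine le_max_of_le_right (Nat.le_induction (P := fun j _ => j ≤ b → f t ≤ f j)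
      (fun _ => le_rfl) (fun j htj ih hjb => ?_) b htb le_rfl)
    have := ih (by omega)
    have := hf t j hat htj (by omega)
    omega
  · push Not at hinc
    refine le_max_of_le_left (Nat.le_induction (P := fun j _ => j ≤ t → f j ≤ f a)
      (fun _ => le_rfl) (fun j haj ih hjt => ?_) t hat le_rfl)
    have := ih (by omega)
    have := hf j t haj (by omega) (by omega)
    omega

lemma gclOdd_succ_sub {n σ δ k u : ℕ} (hσn : σ < n) (hu : u < σ) :
    (gclOdd n σ δ (k + 2) (u + 1) : ℤ) - gclOdd n σ δ (k + 2) u =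
      u.choose k * (n + u - σ : ℕ) + u.choose (k + 1) - (σ - u - 1).choose (k + 1) := by
  obtain ⟨w, hw⟩ : ∃ w, σ - u - 1 = w := ⟨_, rfl⟩
  obtain ⟨r, hr⟩ : ∃ r, n + u - σ - 1 = r := ⟨_, rfl⟩
  rw [gclOdd, gclOdd, hw, hr, show σ - (u + 1) = w by omega, show σ - u = w + 1 by omega,
    show n + (u + 1) - σ - 1 = r + 1 by omega, show n + u - σ = r + 1 by omega,
    show k + 2 - 1 = k + 1 from rfl, Nat.choose_succ_succ' w (k + 1), Nat.choose_succ_succ' u k]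
  push_cast
  ring

theorem gclOdd_le_max {n σ δ ℓ a b t : ℕ} (hℓ : 2 ≤ ℓ) (hσn : σ < n) (hat : a ≤ t) (htb : t ≤ b)
    (hbσ : b ≤ σ) : gclOdd n σ δ ℓ t ≤ max (gclOdd n σ δ ℓ a) (gclOdd n σ δ ℓ b) := by
  obtain ⟨k, rfl⟩ : ∃ k, ℓ = k + 2 := ⟨ℓ - 2, by omega⟩
  have := le_max_of_forall_sub_le_sub (f := fun u => (gclOdd n σ δ (k + 2) u : ℤ))
    (fun i j _ hij hjb => ?_) hat htb
  · exact_mod_cast this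
  simp only [gclOdd_succ_sub hσn (show i < σ by omega), gclOdd_succ_sub hσn (show j < σ by omega)]
  have e₁ := Nat.choose_le_choose k hij
  have e₂ := Nat.choose_le_choose (k + 1) hij
  have e₃ := Nat.choose_le_choose (k + 1) (show σ - j - 1 ≤ σ - i - 1 by omega)
  have e₄ : n + i - σ ≤ n + j - σ := by omega
  have := Nat.mul_le_mul e₁ e₄
  zify at *
  linarith

lemma ncard_neighborSet_eq_degree {V : Type*} [Fintype V] (G : SimpleGraph V) [DecidableRel G.Adj]
    (v : V) : (G.neighborSet v).ncard = G.degree v := by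
  rw [← Nat.card_coe_set_eq, Nat.card_eq_fintype_card, G.card_neighborSet_eq_degree]

theorem max_cliques_odd_general {V : Type*} [Fintype V] [DecidableEq V] (G : SimpleGraph V)
    [DecidableRel G.Adj] (n σ δ ℓ : ℕ) (hn : Fintype.card V = n)
    (hℓ : 2 ≤ ℓ) (hodd : Odd σ) (hn2s : σ + 1 ≤ n)
    (hfm : IsFracMatchingNumber G ((σ : ℝ) / 2))
    (hmin : (∀ v : V, δ ≤ (G.neighborSet v).ncard) ∧
      ∃ v : V, (G.neighborSet v).ncard = δ) :
    (G.cliqueSet ℓ).ncard ≤ max (gclOdd n σ δ ℓ δ) (gclOdd n σ δ ℓ ((σ - 3) / 2)) := by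
  simp only [ncard_neighborSet_eq_degree] at hmin
  obtain ⟨hδ, v, hv⟩ := hmin
  obtain ⟨U, t, hU, ht, hdeg⟩ := hfm.exists_degree_le_of_odd hodd
  obtain ⟨z, -, hz⟩ := exists_mem_notMem_of_card_lt_card (s := U) (t := univ)
    (by rw [card_univ, hn]; omega)
  rw [← SimpleGraph.coe_cliqueFinset, Set.ncard_coe_finset]
  calc #(G.cliqueFinset ℓ) ≤ gclOdd n σ δ ℓ t :=
        card_cliqueFinset_le_gclOdd (by omega) hn (by omega) hU (by omega) hdeg hv
    _ ≤ _ := gclOdd_le_max hℓ (by omega) ((hδ z).trans (hdeg z hz)) (by omega) (by omega)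

/-- main theorem, `2s` odd: let `s = σ/2` be a half-integer with
`σ = 2s` odd, `n ≥ 2s+1 ≥ 5`, `ℓ ≥ 2`.  If `G` has order `n`, fractional matching
number `s` and minimum degree `δ`, then the number of `ℓ`-cliques of `G` is at most
`max(g_ℓ(n,s,δ), g_ℓ(n,s,s−3/2))`, where `s − 3/2 = (σ−3)/2`. -/
theorem max_cliques_odd {V : Type*} [Fintype V] [DecidableEq V] (G : SimpleGraph V)
    [DecidableRel G.Adj] (n σ δ ℓ : ℕ) (hn : Fintype.card V = n) (hδ : 0 < δ)
    (hℓ : 2 ≤ ℓ) (hodd : Odd σ) (hn2s : σ + 1 ≤ n) (h5 : 5 ≤ σ + 1)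
    (hfm : IsFracMatchingNumber G ((σ : ℝ) / 2))
    (hmin : (∀ v : V, δ ≤ (G.neighborSet v).ncard) ∧
      ∃ v : V, (G.neighborSet v).ncard = δ) :
    (G.cliqueSet ℓ).ncard ≤ max (gclOdd n σ δ ℓ δ) (gclOdd n σ δ ℓ ((σ - 3) / 2)) :=
  max_cliques_odd_general G n σ δ ℓ hn hℓ hodd hn2s hfm hmin
end
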